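/- arXiv:math/0610549 — 4 statements merged into one kernel-verified Lean document; each statement's English description precedes it below -/
import Mathlib

section
/- Let G be a finite dihedral group generated by two involutions a and b. Then there exists a conjugate b' of b such that a and b' generate a Sylow 2-subgroup of G. -/
private lemma inv_of_sq {G : Type*} [Group G] {a : G} (ha : a ^ 2 = 1) : a⁻¹ = a :=
  inv_eq_of_mul_eq_one_right (by rw [← sq]; exact ha)

/-- conjugation by `a` inverts `a*b` (zpow version). -/
private lemma dih_conj {G : Type*} [Group G] {a b : G} (ha : a ^ 2 = 1) (hb : b ^ 2 = 1)
    (s : ℤ) : a * (a * b) ^ s * a⁻¹ = (a * b) ^ (-s) := by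
  have key : a * (a * b) * a⁻¹ = (a * b)⁻¹ := by
    rw [mul_inv_rev, inv_of_sq ha, inv_of_sq hb]
    calc a * (a * b) * a = (a * a) * (b * a) := by group
    _ = b * a := by rw [← sq, ha, one_mul]
  rw [← conj_zpow, key, inv_zpow, zpow_neg]

/-- move `a` across a power of `a*b`. -/
private lemma dih_swap {G : Type*} [Group G] {a b : G} (ha : a ^ 2 = 1) (hb : b ^ 2 = 1)
    (s : ℤ) : a * (a * b) ^ s = (a * b) ^ (-s) * a := by
  have := dih_conj ha hb s
  rw [inv_of_sq ha] at this
  calc a * (a * b) ^ s = (a * (a * b) ^ s * a) * a⁻¹ := by group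
  _ = (a * b) ^ (-s) * a := by rw [this, inv_of_sq ha]

/-- classification of elements of a dihedral-type closure. -/
private lemma dih_mem {G : Type*} [Group G] {a b : G} (ha : a ^ 2 = 1) (hb : b ^ 2 = 1)
    {x : G} (hx : x ∈ Subgroup.closure ({a, b} : Set G)) :
    ∃ i : ℤ, x = (a * b) ^ i ∨ x = (a * b) ^ i * a := by
  have haa : a * a = 1 := by rw [← sq]; exact ha
  induction hx using Subgroup.closure_induction with
  | mem x hx =>
    rcases hx with rfl | rfl
    · exact ⟨0, Or.inr (by simp)⟩
    · refine ⟨-1, Or.inr ?_⟩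
      rw [zpow_neg, zpow_one, mul_inv_rev, inv_of_sq ha, inv_of_sq hb, mul_assoc, haa, mul_one]
  | one => exact ⟨0, Or.inl (by simp)⟩
  | mul x y hx hy ihx ihy =>
    obtain ⟨i, hi | hi⟩ := ihx <;> obtain ⟨j, hj | hj⟩ := ihy <;> subst hi <;> subst hj
    · exact ⟨i + j, Or.inl (zpow_add _ _ _).symm⟩
    · exact ⟨i + j, Or.inr (by rw [zpow_add]; group)⟩
    · refine ⟨i + -j, Or.inr ?_⟩
      rw [zpow_add]
      calc (a * b) ^ i * a * (a * b) ^ j = (a * b) ^ i * (a * (a * b) ^ j) := by group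
      _ = (a * b) ^ i * ((a * b) ^ (-j) * a) := by rw [dih_swap ha hb]
      _ = (a * b) ^ i * (a * b) ^ (-j) * a := by group
    · refine ⟨i + -j, Or.inl ?_⟩
      rw [zpow_add]
      calc (a * b) ^ i * a * ((a * b) ^ j * a) = (a * b) ^ i * (a * (a * b) ^ j) * a := by group
      _ = (a * b) ^ i * ((a * b) ^ (-j) * a) * a := by rw [dih_swap ha hb]
      _ = (a * b) ^ i * (a * b) ^ (-j) * (a * a) := by group
      _ = (a * b) ^ i * (a * b) ^ (-j) := by rw [haa, mul_one]
  | inv x hx ihx =>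
    obtain ⟨i, hi | hi⟩ := ihx <;> subst hi
    · exact ⟨-i, Or.inl (by rw [zpow_neg])⟩
    · refine ⟨i, Or.inr ?_⟩
      rw [mul_inv_rev, inv_of_sq ha, ← zpow_neg]
      calc a * (a * b) ^ (-i) = (a * b) ^ (- -i) * a := dih_swap ha hb _
      _ = (a * b) ^ i * a := by rw [neg_neg]

/-- Let `G` be a finite dihedral group generated by two involutions `a` and `b`.
Then there is a conjugate `b'` of `b` such that `a` and `b'` generate a Sylow
`2`-subgroup of `G`. -/
theorem dihedral_sylow_two_of_involutions {G : Type*} [Group G] [Finite G]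
    (a b : G) (ha : a ^ 2 = 1) (hb : b ^ 2 = 1)
    (hgen : Subgroup.closure ({a, b} : Set G) = ⊤) :
    ∃ g : G, ∃ P : Sylow 2 G, (P : Subgroup G) = Subgroup.closure {a, g⁻¹ * b * g} := by
  have haa : a * a = 1 := by rw [← sq]; exact ha
  set c : G := a * b with hc
  have hn0 : orderOf c ≠ 0 := (orderOf_pos c).ne'
  set n : ℕ := orderOf c with hn
  set k : ℕ := n.factorization 2 with hk
  set m : ℕ := n / 2 ^ k with hm
  have hm_dvd : m ∣ n := Nat.ordCompl_dvd n 2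
  have hmk : 2 ^ k * m = n := Nat.ordProj_mul_ordCompl_eq_self n 2
  have h2k_dvd : 2 ^ k ∣ n := Nat.ordProj_dvd n 2
  have hm_odd : ¬ 2 ∣ m := Nat.not_dvd_ordCompl Nat.prime_two hn0
  have hm_pos : 0 < m := Nat.ordCompl_pos 2 hn0
  set j : ℕ := m / 2 with hj
  have hmj : 2 * j + 1 = m := by
    have h1 : m % 2 = 1 := Nat.two_dvd_ne_zero.mp hm_odd
    omega
  -- the conjugate of b
  set g : G := c ^ j with hg
  set b' : G := g⁻¹ * b * g with hb'
  have hb'sq : b' ^ 2 = 1 := by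
    have : b' = g⁻¹ * b * (g⁻¹)⁻¹ := by rw [inv_inv]
    rw [this, conj_pow, hb, mul_one, mul_inv_cancel]
  -- a * b' = c ^ m
  have hab' : a * b' = c ^ m := by
    have h1 : a * g⁻¹ = c ^ j * a := by
      have h2 := dih_swap ha hb (-(j : ℤ))
      rw [neg_neg, zpow_neg, zpow_natCast] at h2
      rw [hg, ← h2]
    calc a * b' = (a * g⁻¹) * b * g := by rw [hb']; group
    _ = c ^ j * (a * b) * c ^ j := by rw [h1, hg]; group
    _ = c ^ (j + 1 + j) := by rw [← hc, pow_add, pow_add, pow_one]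
    _ = c ^ m := by rw [← hmj]; ring_nf
  set H : Subgroup G := Subgroup.closure {a, b'} with hH
  have haH : a ∈ H := Subgroup.subset_closure (by left; rfl)
  have hb'H : b' ∈ H := Subgroup.subset_closure (by right; rfl)
  have hcmH : c ^ m ∈ H := hab' ▸ mul_mem haH hb'H
  have hord_cm : orderOf (c ^ m) = 2 ^ k := by
    rw [orderOf_pow, ← hn, Nat.gcd_eq_right hm_dvd, ← hmk, Nat.mul_div_cancel _ hm_pos]
  -- H is a 2-group
  have hH2 : IsPGroup 2 H := by
    intro x
    refine ⟨k + 1, ?_⟩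
    have hx : (x : G) ∈ Subgroup.closure ({a, b'} : Set G) := x.2
    have key : (x : G) ^ 2 ^ (k + 1) = 1 := by
      obtain ⟨i, hi | hi⟩ := dih_mem ha hb'sq hx
      · have h1 : orderOf (x : G) ∣ 2 ^ k := by
          rw [← hord_cm, ← hab']
          exact orderOf_dvd_of_mem_zpowers ⟨i, hi.symm⟩
        exact orderOf_dvd_iff_pow_eq_one.mp (h1.trans (pow_dvd_pow 2 (Nat.le_succ k)))
      · have hsq : (x : G) ^ 2 = 1 := by
          rw [sq, hi]
          calc ((a * b') ^ i * a) * ((a * b') ^ i * a)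
              = (a * b') ^ i * (a * (a * b') ^ i) * a := by group
          _ = (a * b') ^ i * ((a * b') ^ (-i) * a) * a := by rw [dih_swap ha hb'sq]
          _ = (a * b') ^ i * (a * b') ^ (-i) * (a * a) := by group
          _ = 1 := by rw [haa, mul_one, ← zpow_add, add_neg_cancel, zpow_zero]
        calc (x : G) ^ 2 ^ (k + 1) = ((x : G) ^ 2) ^ 2 ^ k := by
              rw [← pow_mul, ← pow_succ']
        _ = 1 := by rw [hsq, one_pow]
    exact Subtype.ext (by rw [SubmonoidClass.coe_pow, key, OneMemClass.coe_one])
  -- the normal odd-order subgroup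
  set z : G := c ^ 2 ^ k with hz
  set N : Subgroup G := Subgroup.zpowers z with hN
  have hordz : orderOf z = m := by
    rw [hz, orderOf_pow, ← hn, Nat.gcd_eq_right h2k_dvd, ← hmk,
      Nat.mul_div_cancel_left _ (pow_pos two_pos k)]
  have hzi : ∀ i : ℤ, z ^ i = c ^ (((2 ^ k : ℕ) : ℤ) * i) := by
    intro i
    rw [hz, ← zpow_natCast c (2 ^ k), ← zpow_mul]
  have hNnorm : N.Normal := by
    constructor
    intro x hx gg
    obtain ⟨i, hi⟩ := Subgroup.mem_zpowers_iff.mp hx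
    have hgg : gg ∈ Subgroup.closure ({a, b} : Set G) := by rw [hgen]; trivial
    set s : ℤ := ((2 ^ k : ℕ) : ℤ) * i with hs
    obtain ⟨t, ht | ht⟩ := dih_mem ha hb hgg
    · have : gg * x * gg⁻¹ = x := by
        rw [← hi, hzi, ← hs, ht, ← hc]
        calc c ^ t * c ^ s * (c ^ t)⁻¹ = c ^ (t + s + -t) := by
              rw [← zpow_neg, ← zpow_add, ← zpow_add]
        _ = c ^ s := by rw [show t + s + -t = s by ring]
      rw [this]; exact hx
    · have : gg * x * gg⁻¹ = z ^ (-i) := by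
        rw [← hi, hzi, ← hs, ht, ← hc, hzi, show ((2 ^ k : ℕ) : ℤ) * -i = -s by rw [hs]; ring]
        calc (c ^ t * a) * c ^ s * (c ^ t * a)⁻¹
            = c ^ t * (a * c ^ s * a⁻¹) * (c ^ t)⁻¹ := by group
        _ = c ^ t * c ^ (-s) * (c ^ t)⁻¹ := by rw [hc, dih_conj ha hb]
        _ = c ^ (t + -s + -t) := by rw [← zpow_neg, ← zpow_add, ← zpow_add]
        _ = c ^ (-s) := by rw [show t + -s + -t = -s by ring]
      rw [this]; exact Subgroup.zpow_mem _ (Subgroup.mem_zpowers z) _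
  -- H ⊔ N = ⊤
  have hsup : H ⊔ N = ⊤ := by
    rw [eq_top_iff, ← hgen, Subgroup.closure_le]
    have hcmem : c ∈ H ⊔ N := by
      have hcop : Nat.Coprime (2 ^ k) m :=
        Nat.Coprime.pow_left k ((Nat.prime_two.coprime_iff_not_dvd).mpr hm_odd)
      obtain ⟨u, v, huv⟩ := hcop.isCoprime
      have hcalc : c = z ^ u * (c ^ m) ^ v := by
        rw [hz, ← zpow_natCast c (2 ^ k), ← zpow_natCast c m, ← zpow_mul, ← zpow_mul,
          ← zpow_add, show ((2 ^ k : ℕ) : ℤ) * u + ((m : ℕ) : ℤ) * v = 1 from by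
            push_cast at huv ⊢; linarith, zpow_one]
      rw [hcalc]
      exact mul_mem (Subgroup.mem_sup_right (Subgroup.zpow_mem _ (Subgroup.mem_zpowers z) u))
        (Subgroup.mem_sup_left (Subgroup.zpow_mem _ hcmH v))
    intro x hx
    simp only [Set.mem_insert_iff, Set.mem_singleton_iff] at hx
    rcases hx with rfl | rfl
    · exact Subgroup.mem_sup_left haH
    · have hbac : x = a * c := by rw [hc, ← mul_assoc, haa, one_mul]
      rw [hbac]
      exact mul_mem (Subgroup.mem_sup_left haH) hcmem
  -- conclude via Sylow theory
  obtain ⟨P, hHP⟩ := hH2.exists_le_sylow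
  refine ⟨g, P, ?_⟩
  have hPH : (P : Subgroup G) = H := by
    refine le_antisymm ?_ hHP
    intro x hxP
    have hx : x ∈ ((H ⊔ N : Subgroup G) : Set G) := by rw [hsup]; trivial
    haveI := hNnorm
    rw [Subgroup.mul_normal] at hx
    rw [Set.mem_mul] at hx
    obtain ⟨h, hh, w, hw, rfl⟩ := hx
    have hwP : w ∈ P := by
      have hweq : w = h⁻¹ * (h * w) := by group
      rw [hweq]
      exact mul_mem (inv_mem (hHP hh)) hxP
    have hw2 : ∃ s, orderOf w = 2 ^ s := by
      have := (IsPGroup.iff_orderOf.mp P.2) ⟨w, hwP⟩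
      rwa [Subgroup.orderOf_mk] at this
    obtain ⟨s, hsw⟩ := hw2
    have hdvd : orderOf w ∣ m := hordz ▸ orderOf_dvd_of_mem_zpowers hw
    have hw1 : w = 1 := by
      rw [hsw] at hdvd
      cases s with
      | zero => exact orderOf_eq_one_iff.mp (by rw [hsw]; rfl)
      | succ s => exact absurd (dvd_trans (dvd_pow_self 2 s.succ_ne_zero) hdvd) hm_odd
    rw [hw1, mul_one]
    exact hh
  exact hPH
end

section
/- Let K be a field of characteristic p > 3 and let f ∈ K[X]. Suppose there exist α, β, γ, δ in an algebraic closure of K such that f(X) = α·h(γX + δ) + β, where h(X) = X^p − 2X^{(p+1)/2} + X. Then there exist a ∈ K and linear polynomials ℓ, r ∈ K[X] such that f(X) = ℓ(g(r(X))) with g(X) = X^p − 2aX^{(p+1)/2} + a²X. -/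
open Polynomial

/-- Let `K` have characteristic `p > 3` and suppose `f ∈ K[X]` is linearly equivalent over
an algebraic closure of `K` to `h(X) = X^p − 2X^{(p+1)/2} + X`.  Then over `K` itself,
`f` is linearly equivalent to `X^p − 2aX^{(p+1)/2} + a²X` for some `a ∈ K`. -/
theorem sim_descent_char_p {K : Type*} [Field K] {p : ℕ} [CharP K p]
    (hp : p.Prime) (hp3 : 3 < p) (f : K[X])
    (h : ∃ α β γ δ : AlgebraicClosure K, α ≠ 0 ∧ γ ≠ 0 ∧
      f.map (algebraMap K (AlgebraicClosure K)) =
        C α * ((X ^ p - 2 * X ^ ((p + 1) / 2) + X :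
          Polynomial (AlgebraicClosure K)).comp (C γ * X + C δ)) + C β) :
    ∃ a : K, ∃ ℓ r : K[X], ℓ.degree = 1 ∧ r.degree = 1 ∧
      f = ℓ.comp ((X ^ p - C (2 * a) * X ^ ((p + 1) / 2) + C (a ^ 2) * X).comp r) := by
  haveI : Fact p.Prime := ⟨hp⟩
  set L := AlgebraicClosure K with hL
  set φ := algebraMap K L with hφdef
  obtain ⟨α, β, γ, δ, hα, hγ, hf⟩ := h
  haveI : CharP L p := charP_of_injective_algebraMap φ.injective p
  have hinj : Function.Injective φ := φ.injective
  set m : ℕ := (p + 1) / 2 with hm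
  have h2m : 2 * m = p + 1 := by
    have hodd : Odd p := hp.odd_of_ne_two (by omega)
    have : Even (p + 1) := hodd.add_one
    exact Nat.mul_div_cancel' this.two_dvd
  have hmp : m < p := by omega
  have hm3 : 3 ≤ m := by omega
  have h2L : (2 : L) ≠ 0 := by
    have : ((2 : ℕ) : L) ≠ 0 := by
      rw [Ne, CharP.cast_eq_zero_iff L p]
      exact fun hdvd => by have := Nat.le_of_dvd (by norm_num) hdvd; omega
    simpa using this
  have hmL : ((m : ℕ) : L) ≠ 0 := by
    rw [Ne, CharP.cast_eq_zero_iff L p]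
    exact fun hdvd => by
      have := Nat.le_of_dvd (by omega) hdvd
      omega
  set D : L := δ / γ with hDdef
  have hδ : γ * D = δ := by rw [hDdef, mul_comm]; exact div_mul_cancel₀ δ hγ
  -- normalized form of hf
  have hf' : f.map φ = C (α * γ ^ p) * X ^ p - C (2 * α * γ ^ m) * (X + C D) ^ m
      + C (α * γ) * X + C (α * (γ ^ p * D ^ p + γ * D) + β) := by
    rw [hf, ← hδ]
    simp only [add_comp, sub_comp, mul_comp, pow_comp, X_comp, C_comp, ofNat_comp]
    have hZ : (C γ * X + C (γ * D) : L[X]) = C γ * (X + C D) := by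
      rw [C_mul]; ring
    rw [hZ, mul_pow, mul_pow, add_pow_char (p := p), ← C_pow, ← C_pow, ← C_pow]
    simp only [C_mul, C_add, C_pow, map_ofNat]
    ring
  -- coefficient extraction
  have hccoef : ∀ k, ((X + C D) ^ m).coeff k = D ^ (m - k) * (m.choose k : L) :=
    fun k => coeff_X_add_C_pow D m k
  have hcp : φ (f.coeff p) = α * γ ^ p := by
    have := congrArg (fun q : L[X] => q.coeff p) hf'
    simp only [coeff_map, coeff_add, coeff_sub, coeff_C_mul, coeff_X_pow, coeff_X, coeff_C,
      hccoef, Nat.choose_eq_zero_of_lt hmp] at this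
    rw [if_neg (by omega : ¬ (1 = p)), if_neg (by omega : ¬ (p = 0))] at this
    simpa using this
  have hcm : φ (f.coeff m) = -(2 * α * γ ^ m) := by
    have := congrArg (fun q : L[X] => q.coeff m) hf'
    simp only [coeff_map, coeff_add, coeff_sub, coeff_C_mul, coeff_X_pow, coeff_X, coeff_C,
      hccoef, Nat.choose_self, Nat.sub_self] at this
    rw [if_neg (by omega : ¬ (m = p)), if_neg (by omega : ¬ (1 = m)),
      if_neg (by omega : ¬ (m = 0))] at this
    simpa using this
  have hcm1 : φ (f.coeff (m - 1)) = -(2 * α * γ ^ m * (D * (m : L))) := by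
    have := congrArg (fun q : L[X] => q.coeff (m - 1)) hf'
    simp only [coeff_map, coeff_add, coeff_sub, coeff_C_mul, coeff_X_pow, coeff_X, coeff_C,
      hccoef, (by omega : m - (m - 1) = 1)] at this
    rw [(by rw [Nat.choose_symm (by omega : 1 ≤ m), Nat.choose_one_right] :
      m.choose (m - 1) = (m : ℕ))] at this
    rw [if_neg (by omega : ¬ (m - 1 = p)), if_neg (by omega : ¬ (1 = m - 1)),
      if_neg (by omega : ¬ (m - 1 = 0))] at this
    rw [this]; ring
  have hc0 : φ (f.coeff 0) = -(2 * α * γ ^ m * D ^ m) + (α * (γ ^ p * D ^ p + γ * D) + β) := by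
    have := congrArg (fun q : L[X] => q.coeff 0) hf'
    simp only [coeff_map, coeff_add, coeff_sub, coeff_C_mul, coeff_X_pow, coeff_X, coeff_C,
      hccoef, Nat.sub_zero, Nat.choose_zero_right] at this
    rw [if_neg (by omega : ¬ (0 = p)), if_pos trivial] at this
    rw [this]; push_cast; ring
  -- the data over K
  obtain ⟨a, hadef⟩ : ∃ a : K, a = -f.coeff m / (2 * f.coeff p) := ⟨_, rfl⟩
  obtain ⟨d, hddef⟩ : ∃ d : K, d = f.coeff (m - 1) / ((m : K) * f.coeff m) := ⟨_, rfl⟩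
  have hcpne : f.coeff p ≠ 0 := by
    intro h0
    rw [h0, map_zero] at hcp
    exact (mul_ne_zero hα (pow_ne_zero _ hγ)) hcp.symm
  have hcmne : f.coeff m ≠ 0 := by
    intro h0
    rw [h0, map_zero] at hcm
    exact mul_ne_zero (mul_ne_zero h2L hα) (pow_ne_zero _ hγ) (neg_eq_zero.mp hcm.symm)
  have hmK : ((m : ℕ) : K) ≠ 0 := by
    rw [Ne, CharP.cast_eq_zero_iff K p]
    exact fun hdvd => by
      have := Nat.le_of_dvd (by omega) hdvd
      omega
  -- key scalar relations
  have hA : φ a * γ ^ p = γ ^ m := by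
    rw [hadef, map_div₀, map_neg, map_mul, map_ofNat, hcp, hcm]
    rw [neg_neg, div_mul_eq_mul_div, div_eq_iff (mul_ne_zero h2L (mul_ne_zero hα (pow_ne_zero _ hγ)))]
    ring
  have hD : φ d = D := by
    rw [hddef, map_div₀, map_mul, map_natCast, hcm, hcm1]
    rw [div_eq_iff (mul_ne_zero hmL (neg_ne_zero.mpr (mul_ne_zero (mul_ne_zero h2L hα) (pow_ne_zero _ hγ))))]
    ring
  have hA2 : φ a ^ 2 * γ ^ p = γ := by
    refine mul_right_cancel₀ (pow_ne_zero p hγ) ?_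
    calc φ a ^ 2 * γ ^ p * γ ^ p = (φ a * γ ^ p) * (φ a * γ ^ p) := by ring
      _ = γ ^ m * γ ^ m := by rw [hA]
      _ = γ * γ ^ p := by rw [← pow_add, (by omega : m + m = p + 1), pow_succ]; ring
  obtain ⟨v, hvdef⟩ : ∃ v : K,
      v = f.coeff 0 - f.coeff p * (d ^ p - 2 * a * d ^ m + a ^ 2 * d) := ⟨_, rfl⟩
  have hV : φ v = β := by
    rw [hvdef, map_sub, map_mul, hcp, hc0]
    simp only [map_add, map_sub, map_mul, map_pow, map_ofNat, hD]
    linear_combination 2 * α * D ^ m * hA - α * D * hA2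
  refine ⟨a, C (f.coeff p) * X + C v, X + C d, degree_linear hcpne, degree_X_add_C d, ?_⟩
  apply Polynomial.map_injective φ hinj
  rw [hf', Polynomial.map_comp, Polynomial.map_comp]
  simp only [Polynomial.map_add, Polynomial.map_sub, Polynomial.map_mul, Polynomial.map_pow,
    map_C, map_X, map_ofNat]
  simp only [add_comp, sub_comp, mul_comp, pow_comp, X_comp, C_comp]
  have hpow : (X + C D : L[X]) ^ p = X ^ p + C (D ^ p) := by
    rw [add_pow_char (p := p), C_pow]
  rw [hD, hpow]
  have HU : (C (φ (f.coeff p)) : L[X]) = C α * C γ ^ p := by rw [hcp, C_mul, C_pow]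
  have HA' : (C (φ a) : L[X]) * C γ ^ p = C γ ^ m := by rw [← C_pow, ← C_mul, hA, C_pow]
  have HA2' : (C (φ a) : L[X]) ^ 2 * C γ ^ p = C γ := by
    rw [← C_pow, ← C_pow, ← C_mul, hA2]
  have HV' : (C (φ v) : L[X]) = C β := by rw [hV]
  simp only [map_mul, map_pow, map_add, map_ofNat, C_mul, C_add, C_pow]
  linear_combination (-(X ^ p + C D ^ p)) * HU + (2 * (X + C D) ^ m) *
      (C α * HA' + C (φ a) * HU) + (X + C D) * (-(C α) * HA2' - C (φ a) ^ 2 * HU) - HV'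
end

section
/- Let K be a field of characteristic 2 and a ∈ K such that the equation Z² + Z = a has no solution in K. Then the polynomial X² + X + Y² + Y + a is irreducible in K[X,Y]. -/
open Polynomial in
lemma aux_quad {R : Type*} [CommRing R] [IsDomain R] (v : R)
    (hv : ¬ ∃ b c : R, b + c = 1 ∧ b * c = v) :
    Irreducible (X ^ 2 + X + C v : R[X]) := by
  set q : R[X] := X ^ 2 + X + C v with hq
  have hmq : q.Monic := by unfold q; monicity!
  have hdq : q.natDegree = 2 := by unfold q; compute_degree!
  constructor
  · exact fun h => by have := natDegree_eq_zero_of_isUnit h; omega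
  · intro f g hfg
    have hq0 : q ≠ 0 := hmq.ne_zero
    have hf0 : f ≠ 0 := fun h => hq0 (by simp [hfg, h])
    have hg0 : g ≠ 0 := fun h => hq0 (by simp [hfg, h])
    have hlc : f.leadingCoeff * g.leadingCoeff = 1 := by
      rw [← leadingCoeff_mul, ← hfg, hmq.leadingCoeff]
    have hdeg : f.natDegree + g.natDegree = 2 := by
      rw [← natDegree_mul hf0 hg0, ← hfg, hdq]
    rcases Nat.eq_zero_or_pos f.natDegree with h0 | hfpos
    · left
      have hu : IsUnit f.leadingCoeff := IsUnit.of_mul_eq_one _ hlc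
      have hfC : f = C f.leadingCoeff := by
        conv_lhs => rw [eq_C_of_natDegree_eq_zero h0]
        rw [leadingCoeff, h0]
      rw [hfC]; exact isUnit_C.mpr hu
    rcases Nat.eq_zero_or_pos g.natDegree with h0g | hgpos
    · right
      have hu : IsUnit g.leadingCoeff := IsUnit.of_mul_eq_one _ (mul_comm f.leadingCoeff _ ▸ hlc)
      have hgC : g = C g.leadingCoeff := by
        conv_lhs => rw [eq_C_of_natDegree_eq_zero h0g]
        rw [leadingCoeff, h0g]
      rw [hgC]; exact isUnit_C.mpr hu
    -- both degree 1
    exfalso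
    have hdf : f.natDegree = 1 := by omega
    have hdg : g.natDegree = 1 := by omega
    set u := f.leadingCoeff with hu
    set w := g.leadingCoeff with hw
    have hu0 : u ≠ 0 := leadingCoeff_ne_zero.mpr hf0
    have hw0 : w ≠ 0 := leadingCoeff_ne_zero.mpr hg0
    set f' := C w * f with hf'
    set g' := C u * g with hg'
    have hfg' : f' * g' = q := by
      rw [hf', hg']
      have h2 : C w * f * (C u * g) = C (w * u) * (f * g) := by rw [C_mul]; ring
      rw [h2, mul_comm w u, hlc, map_one, one_mul]; exact hfg.symm
    have hdf' : f'.natDegree = 1 := by rw [hf', natDegree_C_mul hw0, hdf]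
    have hdg' : g'.natDegree = 1 := by rw [hg', natDegree_C_mul hu0, hdg]
    have hcf1 : f'.coeff 1 = 1 := by
      rw [hf', coeff_C_mul, show (1:ℕ) = f.natDegree from hdf.symm, ← leadingCoeff, ← hu,
        mul_comm, hlc]
    have hcg1 : g'.coeff 1 = 1 := by
      rw [hg', coeff_C_mul, show (1:ℕ) = g.natDegree from hdg.symm, ← leadingCoeff, ← hw, hlc]
    have hfX : f' = X + C (f'.coeff 0) := by
      conv_lhs => rw [eq_X_add_C_of_natDegree_le_one hdf'.le]
      rw [hcf1, map_one, one_mul]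
    have hgX : g' = X + C (g'.coeff 0) := by
      conv_lhs => rw [eq_X_add_C_of_natDegree_le_one hdg'.le]
      rw [hcg1, map_one, one_mul]
    obtain ⟨b, hb⟩ : ∃ b, f' = X + C b := ⟨f'.coeff 0, hfX⟩
    obtain ⟨c, hc⟩ : ∃ c, g' = X + C c := ⟨g'.coeff 0, hgX⟩
    have hexp : X ^ 2 + C (b + c) * X + C (b * c) = X ^ 2 + X + C v := by
      rw [C_add, C_mul]
      have : X ^ 2 + (C b + C c) * X + C b * C c = (X + C b) * (X + C c) := by ring
      rw [this, ← hb, ← hc, hfg', hq]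
    have h1 : b + c = 1 := by
      have := congrArg (fun p => Polynomial.coeff p 1) hexp
      simpa using this
    have h0 : b * c = v := by
      have := congrArg (fun p => Polynomial.coeff p 0) hexp
      simpa using this
    exact hv ⟨b, c, h1, h0⟩

open Polynomial in
lemma aux_no_pair {K : Type*} [Field K] [CharP K 2] (a : K)
    (ha : ¬ ∃ z : K, z ^ 2 + z = a) :
    ¬ ∃ b c : K[X], b + c = 1 ∧ b * c = X ^ 2 + X + C a := by
  rintro ⟨b, c, h1, h0⟩
  have htwo : (2 : K[X]) = 0 := by
    have h2 : (2 : K) = 0 := by exact_mod_cast CharP.cast_eq_zero K 2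
    rw [← map_ofNat (C : K →+* K[X]) 2, h2, map_zero]
  have hc : c = 1 - b := eq_sub_of_add_eq' h1
  rw [hc] at h0
  set h : K[X] := b + X with hh
  have hkey : h ^ 2 + h = C a := by
    rw [hh]
    linear_combination -h0 + (b * X + b - C a) * htwo
  rcases eq_or_ne h.natDegree 0 with hd0 | hd0
  · obtain ⟨z, hz⟩ := natDegree_eq_zero.mp hd0
    rw [← hz, ← map_pow, ← map_add] at hkey
    exact ha ⟨z, C_injective.eq_iff.mp hkey⟩
  · have h2 : h ^ 2 = C a - h := by linear_combination hkey
    have e1 : (h ^ 2).natDegree = 2 * h.natDegree := natDegree_pow h 2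
    have e2 : (C a - h).natDegree ≤ h.natDegree := by
      refine (natDegree_sub_le _ _).trans ?_
      simp
    rw [h2, ] at e1
    omega

open MvPolynomial

/-- Let `K` be a field of characteristic `2` and `a ∈ K` such that `Z² + Z = a` has no
solution in `K`.  Then `X² + X + Y² + Y + a` is irreducible in `K[X,Y]`. -/
theorem char_two_quadratic_irreducible {K : Type*} [Field K] [CharP K 2] (a : K)
    (ha : ¬ ∃ z : K, z ^ 2 + z = a) :
    Irreducible (X 0 ^ 2 + X 0 + X 1 ^ 2 + X 1 + C a : MvPolynomial (Fin 2) K) := by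
  let e : MvPolynomial (Fin 2) K ≃ₐ[K] Polynomial (Polynomial K) :=
    (MvPolynomial.finSuccEquiv K 1).trans (Polynomial.mapAlgEquiv
      ((MvPolynomial.finSuccEquiv K 0).trans
        (Polynomial.mapAlgEquiv (MvPolynomial.isEmptyAlgEquiv K (Fin 0)))))
  have := MulEquiv.irreducible_iff (M := MvPolynomial (Fin 2) K)
    (N := Polynomial (Polynomial K)) e.toMulEquiv
    (x := (X 0 ^ 2 + X 0 + X 1 ^ 2 + X 1 + C a : MvPolynomial (Fin 2) K))
  rw [← this]
  have he0 : e (X 0) = Polynomial.X := by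
    simp [e, finSuccEquiv_X_zero]
  have he1 : e (X 1) = Polynomial.C Polynomial.X := by
    have h1 : (X 1 : MvPolynomial (Fin 2) K) = X (Fin.succ 0) := rfl
    show Polynomial.mapAlgEquiv _ ((MvPolynomial.finSuccEquiv K 1) (X 1)) = _
    rw [h1, finSuccEquiv_X_succ, Polynomial.coe_mapAlgEquiv, Polynomial.map_C]
    congr 1
    show Polynomial.mapAlgEquiv _ ((MvPolynomial.finSuccEquiv K 0) (X 0)) = _
    rw [finSuccEquiv_X_zero, Polynomial.coe_mapAlgEquiv, Polynomial.map_X]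
  have hea : e (C a) = Polynomial.C (Polynomial.C a) := by
    have h1 : (C a : MvPolynomial (Fin 2) K) = algebraMap K _ a := rfl
    rw [h1, AlgEquiv.commutes]
    rfl
  have hP : e (X 0 ^ 2 + X 0 + X 1 ^ 2 + X 1 + C a : MvPolynomial (Fin 2) K)
      = Polynomial.X ^ 2 + Polynomial.X
        + Polynomial.C (Polynomial.X ^ 2 + Polynomial.X + Polynomial.C a) := by
    simp only [map_add, map_pow, he0, he1, hea]
    ring
  rw [show e.toMulEquiv (X 0 ^ 2 + X 0 + X 1 ^ 2 + X 1 + C a : MvPolynomial (Fin 2) K)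
    = e (X 0 ^ 2 + X 0 + X 1 ^ 2 + X 1 + C a : MvPolynomial (Fin 2) K) from rfl, hP]
  exact aux_quad _ (aux_no_pair a ha)
end

section
/- Let K be a field of characteristic p ≥ 3, let a ∈ K be nonzero, and suppose Z^{p−1} − a splits over K with root set S. Let T ⊆ S be such that S is the disjoint union of T and −T. Then with h(X) = X^p − 2aX^{(p+1)/2} + a²X, one has h(X) − h(Y) = (X − Y) · ∏_{t ∈ T} ((X−Y)² − 2t²(X+Y) + t⁴) in K'[X,Y] for any field K' containing all elements of T. -/
open MvPolynomial Finset

lemma mv_expand_monomial' {K : Type*} [CommRing K] {σ : Type*} (n : ℕ) (d : σ →₀ ℕ) (r : K) :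
    expand n (monomial d r) = monomial (n • d) r := by
  rw [expand_monomial, monomial_eq,
    Finsupp.prod_of_support_subset _ Finsupp.support_smul _ (fun i _ => pow_zero _)]

lemma mv_coeff_expand {K : Type*} [CommRing K] {σ : Type*} {n : ℕ} (hn : 0 < n)
    (f : MvPolynomial σ K) (d : σ →₀ ℕ) : coeff (n • d) (expand n f) = coeff d f := by
  classical
  induction f using MvPolynomial.induction_on' with
  | monomial e r =>
    rw [mv_expand_monomial', coeff_monomial, coeff_monomial]
    congr 1
    simp only [eq_iff_iff]
    constructor
    · intro h; ext i
      have := DFunLike.congr_fun h i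
      simp only [Finsupp.smul_apply, smul_eq_mul] at this
      exact Nat.eq_of_mul_eq_mul_left hn this
    · rintro rfl; rfl
  | add f g hf hg => simp [coeff_add, hf, hg]

lemma mv_expand_injective {K : Type*} [CommRing K] {σ : Type*} {n : ℕ} (hn : 0 < n) :
    Function.Injective (expand n : MvPolynomial σ K →ₐ[K] MvPolynomial σ K) := by
  intro f g h
  ext d
  have := congrArg (coeff (n • d)) h
  rwa [mv_coeff_expand hn, mv_coeff_expand hn] at this

/-- Let `K` have characteristic `p ≥ 3`, let `a ∈ K` be nonzero and suppose
`Z^{p-1} − a` splits over `K` with root set `T ∪ (−T)` (a disjoint union).  Then for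
`h(X) = X^p − 2aX^{(p+1)/2} + a²X` one has
`h(X) − h(Y) = (X − Y) ∏_{t ∈ T} ((X−Y)² − 2t²(X+Y) + t⁴)` in `K[X,Y]`. -/
theorem factorization_h_char_p {K : Type*} [Field K] {p : ℕ} [CharP K p]
    (hp : p.Prime) (hp3 : 3 ≤ p) (a : K) (ha : a ≠ 0) (T : Finset K)
    (hT : (Polynomial.X ^ (p - 1) - Polynomial.C a : Polynomial K) =
      ∏ t ∈ T, ((Polynomial.X - Polynomial.C t) * (Polynomial.X + Polynomial.C t))) :
    (Polynomial.aeval (X 0 : MvPolynomial (Fin 2) K)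
        (Polynomial.X ^ p - Polynomial.C (2 * a) * Polynomial.X ^ ((p + 1) / 2)
          + Polynomial.C (a ^ 2) * Polynomial.X)) -
      (Polynomial.aeval (X 1 : MvPolynomial (Fin 2) K)
        (Polynomial.X ^ p - Polynomial.C (2 * a) * Polynomial.X ^ ((p + 1) / 2)
          + Polynomial.C (a ^ 2) * Polynomial.X)) =
    (X 0 - X 1) *
      ∏ t ∈ T, ((X 0 - X 1) ^ 2 - C (2 * t ^ 2) * (X 0 + X 1) + C (t ^ 4)) := by
  haveI := Fact.mk hp
  have hodd : Odd p := hp.odd_of_ne_two (by omega)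
  set m : ℕ := (p - 1) / 2 with hm
  have hpm : p = 2 * m + 1 := by
    obtain ⟨k, hk⟩ := hodd; omega
  have hm1 : (p + 1) / 2 = m + 1 := by omega
  have hpm' : p - 1 = 2 * m := by omega
  -- Step 1: single-variable identity
  have h1 : (∏ t ∈ T, (Polynomial.X - Polynomial.C (t ^ 2)) : Polynomial K)
      = Polynomial.X ^ m - Polynomial.C a := by
    apply Polynomial.expand_injective (R := K) (n := 2) two_pos
    rw [map_prod, map_sub, map_pow, Polynomial.expand_X, Polynomial.expand_C,
      ← pow_mul, ← hpm', hT]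
    apply Finset.prod_congr rfl
    intro t _
    rw [map_sub, Polynomial.expand_X, Polynomial.expand_C, map_pow]
    ring
  -- Step 2: specialize to any element squared
  have key : ∀ z : MvPolynomial (Fin 2) K,
      z ^ (p - 1) - C a = ∏ t ∈ T, (z ^ 2 - C t ^ 2) := by
    intro z
    have h2 := congrArg (Polynomial.aeval (z ^ 2)) h1
    simp only [map_prod, map_sub, map_pow, Polynomial.aeval_X, Polynomial.aeval_C,
      MvPolynomial.algebraMap_eq, ← pow_mul] at h2
    rw [hpm']
    exact h2.symm
  -- Step 3: reduce via expand 2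
  apply mv_expand_injective (K := K) (σ := Fin 2) two_pos
  simp only [map_sub, map_add, map_mul, map_pow, map_prod, expand_X, map_ofNat,
    Polynomial.aeval_X, Polynomial.aeval_C, MvPolynomial.algebraMap_eq, expand_C]
  set u : MvPolynomial (Fin 2) K := X 0
  set v : MvPolynomial (Fin 2) K := X 1
  calc (u ^ 2) ^ p - 2 * C a * (u ^ 2) ^ ((p + 1) / 2) + C a ^ 2 * u ^ 2 -
      ((v ^ 2) ^ p - 2 * C a * (v ^ 2) ^ ((p + 1) / 2) + C a ^ 2 * v ^ 2)
      = (u ^ p - C a * u) ^ 2 - (v ^ p - C a * v) ^ 2 := by rw [hm1, hpm]; ring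
    _ = ((u ^ p - v ^ p) - C a * (u - v)) * ((u ^ p + v ^ p) - C a * (u + v)) := by ring
    _ = ((u - v) ^ p - C a * (u - v)) * ((u + v) ^ p - C a * (u + v)) := by
        rw [sub_pow_char, add_pow_char]
    _ = ((u - v) * ((u - v) ^ (p - 1) - C a)) * ((u + v) * ((u + v) ^ (p - 1) - C a)) := by
        rw [hpm', hpm]; ring
    _ = ((u - v) * (u + v)) *
        ((∏ t ∈ T, ((u - v) ^ 2 - C t ^ 2)) * (∏ t ∈ T, ((u + v) ^ 2 - C t ^ 2))) := by
        rw [key, key]; ring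
    _ = (u ^ 2 - v ^ 2) *
        ∏ x ∈ T, ((u ^ 2 - v ^ 2) ^ 2 - 2 * C x ^ 2 * (u ^ 2 + v ^ 2) + C x ^ 4) := by
        rw [← Finset.prod_mul_distrib,
          Finset.prod_congr rfl (fun t _ => by ring :
            ∀ t ∈ T, ((u - v) ^ 2 - C t ^ 2) * ((u + v) ^ 2 - C t ^ 2)
              = (u ^ 2 - v ^ 2) ^ 2 - 2 * C t ^ 2 * (u ^ 2 + v ^ 2) + C t ^ 4)]
        ring
end
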